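/- arXiv:1010.4341 — 6 statements merged into one kernel-verified Lean document; each statement's English description precedes it below -/
import Mathlib

section
/- Let 0 < α ≤ 1, β = 2/α, and χ(r) = β(1 - (1+r)^(-α))/r for r > 0. Then χ'(r) = -β·((1+r)^(α+1) - (α+1)r - 1)/(r²(1+r)^(α+1)), and |χ'(r)| ≤ β/(1+r)². -/
open Real

/-- Key inequality: for `s ≥ 1` and `0 < α ≤ 1`,
`2 s^α ≤ (α+1) s - α + s^(α-1)`. -/
lemma chi_key_ineq (α s : ℝ) (hα : 0 < α) (hα1 : α ≤ 1) (hs : 1 ≤ s) :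
    2 * s ^ α ≤ (α + 1) * s - α + s ^ (α - 1) := by
  have hs0 : (0 : ℝ) < s := lt_of_lt_of_le one_pos hs
  have h2α : (0 : ℝ) < 2 - α := by linarith
  have hne : (2 : ℝ) - α ≠ 0 := ne_of_gt h2α
  set lam : ℝ := 1 / (2 - α) with hlam
  have hlam0 : 0 ≤ lam := by positivity
  have hlam1 : 0 ≤ 1 - lam := by
    have : lam ≤ 1 := by rw [hlam, div_le_one h2α]; linarith
    linarith
  -- AM-GM: s^α ≤ lam*s + (1-lam)*s^(α-1)
  have hAM : s ^ α ≤ lam * s + (1 - lam) * s ^ (α - 1) := by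
    have h := Real.geom_mean_le_arith_mean2_weighted hlam0 hlam1 hs0.le
      (Real.rpow_nonneg hs0.le (α - 1)) (by ring)
    calc s ^ α = s ^ lam * (s ^ (α - 1)) ^ (1 - lam) := by
          rw [← Real.rpow_mul hs0.le, ← Real.rpow_add hs0]
          congr 1
          rw [hlam]
          field_simp
          ring
      _ ≤ lam * s + (1 - lam) * s ^ (α - 1) := h
  -- Bernoulli-type bound: s^(α-1) ≥ 1 + (α-1)*(s-1)
  have hB : 1 + (α - 1) * (s - 1) ≤ s ^ (α - 1) := by
    have hx : 0 ≤ (1 - α) * (s - 1) := by nlinarith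
    have h1' : s ^ (1 - α) ≤ 1 + (1 - α) * (s - 1) := by
      have h1 : (1 + (s - 1)) ^ (1 - α) ≤ 1 + (1 - α) * (s - 1) :=
        rpow_one_add_le_one_add_mul_self (by linarith) (by linarith) (by linarith)
      simpa using h1
    have hpos : 0 < s ^ (1 - α) := Real.rpow_pos_of_pos hs0 _
    have hpos2 : 0 < 1 + (1 - α) * (s - 1) := lt_of_lt_of_le hpos h1'
    have hinv : (1 + (1 - α) * (s - 1))⁻¹ ≤ s ^ (α - 1) := by
      rw [show α - 1 = -(1 - α) by ring, Real.rpow_neg hs0.le]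
      exact inv_anti₀ hpos h1'
    have hinv2 : 1 + (α - 1) * (s - 1) ≤ (1 + (1 - α) * (s - 1))⁻¹ := by
      rw [inv_eq_one_div, le_div_iff₀ hpos2]
      nlinarith
    linarith
  -- combine
  have hcomb : 2 - α ≤ (1 - α) * s + s ^ (α - 1) := by nlinarith [hB]
  have hAM' : (2 - α) * s ^ α ≤ s + (1 - α) * s ^ (α - 1) := by
    have h := mul_le_mul_of_nonneg_left hAM h2α.le
    have hl : lam * (2 - α) = 1 := by rw [hlam]; field_simp
    have h2 : (2 - α) * (lam * s + (1 - lam) * s ^ (α - 1))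
        = s + (1 - α) * s ^ (α - 1) := by
      linear_combination (s - s ^ (α - 1)) * hl
    linarith
  have hc3 : 0 ≤ α * ((1 - α) * s + s ^ (α - 1) - (2 - α)) :=
    mul_nonneg hα.le (by linarith)
  have hmain : (2 - α) * (2 * s ^ α) ≤ (2 - α) * ((α + 1) * s - α + s ^ (α - 1)) := by
    nlinarith [hAM', hc3]
  exact le_of_mul_le_mul_left hmain h2α

/-- Derivative formula and bound for χ(r) = β(1 - (1+r)^(-α))/r, 0 < α ≤ 1, β = 2/α. -/
theorem chi_deriv_formula_and_bound
    (α β : ℝ) (hα : 0 < α) (hα1 : α ≤ 1) (hβ : β = 2 / α)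
    (χ : ℝ → ℝ)
    (hχ : ∀ r : ℝ, 0 < r → χ r = β * (1 - (1 + r) ^ (-α)) / r) :
    ∀ r : ℝ, 0 < r →
      deriv χ r = -β * ((1 + r) ^ (α + 1) - (α + 1) * r - 1) / (r ^ 2 * (1 + r) ^ (α + 1)) ∧
      |deriv χ r| ≤ β / (1 + r) ^ 2 := by
  intro r hr
  have hs : (0 : ℝ) < 1 + r := by linarith
  have hβpos : 0 < β := by rw [hβ]; positivity
  have hrne : r ≠ 0 := ne_of_gt hr
  have hC : (0 : ℝ) < (1 + r) ^ (α + 1) := Real.rpow_pos_of_pos hs _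
  -- derivative of the explicit formula
  have hinner : HasDerivAt (fun x : ℝ => (1 + x) ^ (-α)) (1 * (-α) * (1 + r) ^ (-α - 1)) r :=
    (HasDerivAt.const_add 1 (hasDerivAt_id r)).rpow_const (Or.inl (ne_of_gt hs))
  have hnum : HasDerivAt (fun x : ℝ => β * (1 - (1 + x) ^ (-α)))
      (β * (0 - 1 * (-α) * (1 + r) ^ (-α - 1))) r :=
    ((hasDerivAt_const r (1:ℝ)).sub hinner).const_mul β
  have hdiv : HasDerivAt (fun x : ℝ => β * (1 - (1 + x) ^ (-α)) / x)
      ((β * (0 - 1 * (-α) * (1 + r) ^ (-α - 1)) * r - β * (1 - (1 + r) ^ (-α)) * 1) / r ^ 2) r :=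
    hnum.div (hasDerivAt_id r) hrne
  have hEq : deriv χ r =
      (β * (0 - 1 * (-α) * (1 + r) ^ (-α - 1)) * r - β * (1 - (1 + r) ^ (-α)) * 1) / r ^ 2 := by
    have hev : χ =ᶠ[nhds r] fun x : ℝ => β * (1 - (1 + x) ^ (-α)) / x := by
      filter_upwards [Ioi_mem_nhds hr] with x hx
      exact hχ x hx
    rw [hev.deriv_eq]
    exact hdiv.deriv
  have e1 : (1 + r) ^ (-α - 1) * (1 + r) ^ (α + 1) = 1 := by
    rw [← Real.rpow_add hs]; norm_num
  have e2 : (1 + r) ^ (-α) * (1 + r) ^ (α + 1) = 1 + r := by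
    rw [← Real.rpow_add hs]; norm_num
  have hform : deriv χ r =
      -β * ((1 + r) ^ (α + 1) - (α + 1) * r - 1) / (r ^ 2 * (1 + r) ^ (α + 1)) := by
    rw [hEq, div_eq_div_iff (by positivity) (by positivity)]
    linear_combination (β * α * r ^ 3) * e1 + (β * r ^ 2) * e2
  refine ⟨hform, ?_⟩
  -- nonnegativity of N
  have hN : 0 ≤ (1 + r) ^ (α + 1) - (α + 1) * r - 1 := by
    have := one_add_mul_self_le_rpow_one_add (s := r) (by linarith) (p := α + 1) (by linarith)
    linarith
  -- key bound N ≤ r^2 * (1+r)^(α-1)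
  have i1 : (1 + r) * (1 + r) ^ (α - 1) = (1 + r) ^ α := by
    nth_rewrite 1 [← Real.rpow_one (1 + r)]
    rw [← Real.rpow_add hs]; norm_num
  have i2 : (1 + r) * (1 + r) ^ α = (1 + r) ^ (α + 1) := by
    nth_rewrite 1 [← Real.rpow_one (1 + r)]
    rw [← Real.rpow_add hs]; ring_nf
  have i5 : r ^ 2 * (1 + r) ^ (α - 1)
      = (1 + r) ^ (α + 1) - 2 * (1 + r) ^ α + (1 + r) ^ (α - 1) := by
    linear_combination ((1 + r) - 2) * i1 + i2
  have hkey : (1 + r) ^ (α + 1) - (α + 1) * r - 1 ≤ r ^ 2 * (1 + r) ^ (α - 1) := by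
    have h := chi_key_ineq α (1 + r) hα hα1 (by linarith)
    linarith [h, i5]
  rw [hform, abs_div, abs_of_pos (show (0:ℝ) < r ^ 2 * (1 + r) ^ (α + 1) by positivity)]
  rw [abs_of_nonpos (by nlinarith : -β * ((1 + r) ^ (α + 1) - (α + 1) * r - 1) ≤ 0)]
  rw [div_le_div_iff₀ (by positivity) (by positivity)]
  have i3 : (1 + r) ^ (α - 1) * (1 + r) ^ 2 = (1 + r) ^ (α + 1) := by
    rw [← Real.rpow_natCast (1 + r) 2, ← Real.rpow_add hs]
    ring_nf
  have h6 : ((1 + r) ^ (α + 1) - (α + 1) * r - 1) * (1 + r) ^ 2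
      ≤ r ^ 2 * (1 + r) ^ (α - 1) * (1 + r) ^ 2 :=
    mul_le_mul_of_nonneg_right hkey (by positivity)
  have i3' : r ^ 2 * (1 + r) ^ (α - 1) * (1 + r) ^ 2 = r ^ 2 * (1 + r) ^ (α + 1) := by
    linear_combination r ^ 2 * i3
  have h7 : ((1 + r) ^ (α + 1) - (α + 1) * r - 1) * (1 + r) ^ 2
      ≤ r ^ 2 * (1 + r) ^ (α + 1) := h6.trans_eq i3'
  nlinarith [mul_le_mul_of_nonneg_left h7 hβpos.le]
end

section
/- For 0 < α ≤ 1 and all r > 0, 0 ≤ ((1+r)^(α+1) - (α+1)r - 1)/r² ≤ (1+r)^(α-1). -/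
/-!
The lower bound is Bernoulli's inequality for the exponent `α + 1 ≥ 1`. For the upper bound,
split the quotient as `((1+r)^α - 1)/r + ((1+r)^α - αr - 1)/r²`: the second term is `≤ 0` by
Bernoulli's inequality for the exponent `α ≤ 1`, and writing `(1+r)^α = b (1+r)` with
`b = (1+r)^(α-1) ≤ 1` shows that the first term is at most `b`.
-/

theorem one_add_rpow_add_one_sub_div_sq (α : ℝ) {r : ℝ} (hr : r ≠ 0) (hr1 : 1 + r ≠ 0) :
    ((1 + r) ^ (α + 1) - (α + 1) * r - 1) / r ^ 2 =
      ((1 + r) ^ α - 1) / r + ((1 + r) ^ α - α * r - 1) / r ^ 2 := by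
  rw [Real.rpow_add_one hr1]
  field_simp
  ring

theorem one_add_rpow_sub_one_div_le {α r : ℝ} (hα : α ≤ 1) (hr : 0 < r) :
    ((1 + r) ^ α - 1) / r ≤ (1 + r) ^ (α - 1) := by
  have hb : (1 + r) ^ (α - 1) ≤ 1 :=
    Real.rpow_le_one_of_one_le_of_nonpos (by linarith) (by linarith)
  have ha : (1 + r) ^ α = (1 + r) ^ (α - 1) * (1 + r) := by
    rw [← Real.rpow_add_one (by positivity)]
    ring_nf
  rw [div_le_iff₀ hr, ha]
  linarith

/-- For 0 < α ≤ 1 and r > 0: 0 ≤ ((1+r)^(α+1) - (α+1)r - 1)/r² ≤ (1+r)^(α-1). -/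
theorem second_difference_quotient_bounds
    (α r : ℝ) (hα : 0 < α) (hα1 : α ≤ 1) (hr : 0 < r) :
    0 ≤ ((1 + r) ^ (α + 1) - (α + 1) * r - 1) / r ^ 2 ∧
    ((1 + r) ^ (α + 1) - (α + 1) * r - 1) / r ^ 2 ≤ (1 + r) ^ (α - 1) := by
  have hr' : -1 ≤ r := by linarith
  constructor
  · have hBernoulli := one_add_mul_self_le_rpow_one_add hr' (p := α + 1) (by linarith)
    exact div_nonneg (by linarith) (sq_nonneg r)
  · have hBernoulli := rpow_one_add_le_one_add_mul_self hr' hα.le hα1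
    have hfirst := one_add_rpow_sub_one_div_le hα1 hr
    have hsecond : ((1 + r) ^ α - α * r - 1) / r ^ 2 ≤ 0 :=
      div_nonpos_of_nonpos_of_nonneg (by linarith) (sq_nonneg r)
    rw [one_add_rpow_add_one_sub_div_sq α hr.ne' (by linarith)]
    linarith
end

section
/- Let D be a symmetric positive definite 3×3 real matrix with λ·I ≤ D ≤ λ⁻¹·I for some 0 < λ ≤ 1, let b ∈ ℝ¹ˣ³ with |b| ≤ H·√3 for each entry bounded by H ≥ 0, and let a ≥ λ with a ≤ 1+H. Set s = a + b D⁻¹ bᵀ. Then λ ≤ s ≤ 1 + H + 3λ⁻¹H², and the matrix M := D⁻¹ - (D⁻¹bᵀ b D⁻¹)/s satisfies λ₁·I ≤ M ≤ λ₁⁻¹·I where λ₁ = λ²/(1 + H + 3H²λ⁻¹). -/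
/-!
Conjugation by square roots (`CFC.conjSqrt`) is monotone for the Loewner order. Conjugating by
`√(D⁻¹)` turns `λ ≤ D ≤ λ⁻¹` into `λ ≤ D⁻¹ ≤ λ⁻¹`, and conjugating the Cauchy–Schwarz inequality
`wᵀw ≤ |w|²` for `w = b√(D⁻¹)` gives `D⁻¹bᵀbD⁻¹ ≤ (bD⁻¹bᵀ) D⁻¹`. Since `s = a + bD⁻¹bᵀ`, the
latter yields `(a/s) D⁻¹ ≤ M ≤ D⁻¹`, and the scalar bounds on `s` finish the proof.
-/

open Matrix Ring
open scoped MatrixOrder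

section InverseBounds

variable {A : Type*} [PartialOrder A] [Ring A] [StarRing A] [TopologicalSpace A]
  [StarOrderedRing A] [Algebra ℝ A] [ContinuousFunctionalCalculus ℝ A IsSelfAdjoint]
  [NonnegSpectrumClass ℝ A] [IsSemitopologicalRing A] [T2Space A] [PosSMulMono ℝ A]
  {a : A} {c : ℝ}

lemma ringInverse_le_smul_one (ha : IsStrictlyPositive a) (hc : 0 < c) (h : c • 1 ≤ a) :
    a⁻¹ʳ ≤ c⁻¹ • (1 : A) := by
  have key : c • a⁻¹ʳ ≤ 1 := by
    simpa [CFC.conjSqrt_one _ ha.ringInverse.nonneg, CFC.conjSqrt_ringInverse_self a ha] using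
      CFC.conjSqrt_monotone (c := a⁻¹ʳ) h
  simpa [smul_smul, inv_mul_cancel₀ hc.ne'] using
    smul_le_smul_of_nonneg_left key (inv_nonneg.2 hc.le)

lemma smul_one_le_ringInverse (ha : IsStrictlyPositive a) (hc : 0 < c) (h : a ≤ c • 1) :
    c⁻¹ • (1 : A) ≤ a⁻¹ʳ := by
  have key : 1 ≤ c • a⁻¹ʳ := by
    simpa [CFC.conjSqrt_one _ ha.ringInverse.nonneg, CFC.conjSqrt_ringInverse_self a ha] using
      CFC.conjSqrt_monotone (c := a⁻¹ʳ) h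
  simpa [smul_smul, inv_mul_cancel₀ hc.ne'] using
    smul_le_smul_of_nonneg_left key (inv_nonneg.2 hc.le)

end InverseBounds

lemma div_add_smul_le_sub_inv_smul {E : Type*} [AddCommGroup E] [PartialOrder E]
    [IsOrderedAddMonoid E] [Module ℝ E] [PosSMulMono ℝ E] {x y : E} {a q : ℝ}
    (h : y ≤ q • x) (hs : 0 < a + q) : (a / (a + q)) • x ≤ x - (a + q)⁻¹ • y :=
  calc (a / (a + q)) • x = x - (a + q)⁻¹ • (q • x) := by
        match_scalars
        field_simp
        ring
    _ ≤ x - (a + q)⁻¹ • y := sub_le_sub_left (smul_le_smul_of_nonneg_left h (inv_nonneg.2 hs.le)) x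

lemma sq_div_le_div_mul {lam a s K : ℝ} (hlam : 0 < lam) (ha : lam ≤ a) (hs : 0 < s)
    (hsK : s ≤ K) : lam ^ 2 / K ≤ a / s * lam := by
  rw [sq, mul_div_right_comm]
  exact mul_le_mul_of_nonneg_right (div_le_div₀ (hlam.le.trans ha) ha hs hsK) hlam.le

namespace Matrix

variable {m n : Type*} [Fintype n]

lemma transpose_mul_self_le_smul_one [DecidableEq n] (w : Matrix (Fin 1) n ℝ) :
    wᵀ * w ≤ (w * wᵀ) 0 0 • (1 : Matrix n n ℝ) := by
  rw [le_iff]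
  refine PosSemidef.of_dotProduct_mulVec_nonneg ?_ fun x => ?_
  · simp [IsHermitian, conjTranspose_eq_transpose_of_trivial, transpose_sub, transpose_mul]
  · have hquad : x ⬝ᵥ ((wᵀ * w) *ᵥ x) = (∑ i, w 0 i * x i) ^ 2 := by
      rw [← mulVec_mulVec, dotProduct_mulVec, vecMul_transpose]
      simp [dotProduct, mulVec, sq]
    have hnorm : (w * wᵀ) 0 0 = ∑ i, w 0 i ^ 2 := by simp [mul_apply, sq]
    have hcs := Finset.univ.sum_mul_sq_le_sq_mul_sq (w 0) x
    simp only [star_trivial, sub_mulVec, smul_mulVec, one_mulVec, dotProduct_sub,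
      dotProduct_smul, smul_eq_mul, hquad, hnorm]
    simpa [dotProduct, sq] using hcs

lemma PosSemidef.mul_transpose_mul_mul_le [DecidableEq n] {P : Matrix n n ℝ}
    (hP : P.PosSemidef) (b : Matrix (Fin 1) n ℝ) :
    P * bᵀ * b * P ≤ (b * P * bᵀ) 0 0 • P := by
  have h := CFC.conjSqrt_monotone (c := P) (transpose_mul_self_le_smul_one (b * CFC.sqrt P))
  rw [map_smul, CFC.conjSqrt_one P hP.nonneg, CFC.conjSqrt_apply] at h
  obtain ⟨E, hE⟩ : ∃ E, CFC.sqrt P = E := ⟨_, rfl⟩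
  have hEE : E * E = P := hE ▸ CFC.sqrt_mul_sqrt_self P hP.nonneg
  have hEt : Eᵀ = E := hE ▸ (CFC.sqrt_nonneg P).posSemidef.isHermitian
  rw [hE, transpose_mul, hEt] at h
  rw [← hEE] at h ⊢
  simpa only [Matrix.mul_assoc] using h

lemma PosSemidef.mul_transpose_mul_mul_nonneg [Fintype m] {P : Matrix n n ℝ} (hP : P.PosSemidef)
    (b : Matrix m n ℝ) : 0 ≤ P * bᵀ * b * P := by
  have hPt : Pᵀ = P := hP.isHermitian
  simpa [Matrix.mul_assoc, hPt] using (b * P).posSemidef_conjTranspose_mul_self.nonneg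

lemma mul_transpose_apply_self_le (b : Matrix m n ℝ) {H : ℝ} (i : m) (hb : ∀ j, |b i j| ≤ H) :
    (b * bᵀ) i i ≤ Fintype.card n * H ^ 2 := by
  have hsq (j : n) : b i j * b i j ≤ H ^ 2 := by
    simpa [← sq, sq_abs] using pow_le_pow_left₀ (abs_nonneg _) (hb j) 2
  calc (b * bᵀ) i i = ∑ j, b i j * b i j := by simp [mul_apply]
    _ ≤ ∑ _j : n, H ^ 2 := Finset.sum_le_sum fun j _ => hsq j
    _ = Fintype.card n * H ^ 2 := by simp

lemma mul_mul_transpose_apply_le [Finite m] [DecidableEq n] {P : Matrix n n ℝ} {c : ℝ}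
    (h : P ≤ c • 1) (b : Matrix m n ℝ) (i : m) : (b * P * bᵀ) i i ≤ c * (b * bᵀ) i i := by
  have := ((le_iff.mp h).mul_mul_conjTranspose_same b).diag_nonneg (i := i)
  simpa [Matrix.mul_sub, Matrix.sub_mul, sub_nonneg] using this

lemma mul_mul_transpose_apply_le_of_abs_le [Finite m] [DecidableEq n] {P : Matrix n n ℝ} {c H : ℝ}
    (hc : 0 ≤ c) (h : P ≤ c • 1) (b : Matrix m n ℝ) (i : m) (hb : ∀ j, |b i j| ≤ H) :
    (b * P * bᵀ) i i ≤ c * Fintype.card n * H ^ 2 := by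
  rw [mul_assoc]
  exact (mul_mul_transpose_apply_le h b i).trans
    (mul_le_mul_of_nonneg_left (b.mul_transpose_apply_self_le i hb) hc)

end Matrix

theorem uniform_ellipticity_inverse_block_general
    (lam H a : ℝ) (hlam : 0 < lam)
    (ha1 : lam ≤ a) (ha2 : a ≤ 1 + H)
    (b : Matrix (Fin 1) (Fin 3) ℝ) (hb : ∀ i, |b 0 i| ≤ H)
    (D : Matrix (Fin 3) (Fin 3) ℝ) (hD : D.PosDef)
    (hDlo : (D - lam • (1 : Matrix (Fin 3) (Fin 3) ℝ)).PosSemidef)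
    (hDhi : (lam⁻¹ • (1 : Matrix (Fin 3) (Fin 3) ℝ) - D).PosSemidef)
    (s : ℝ) (hs : s = a + (b * D⁻¹ * bᵀ) 0 0)
    (M : Matrix (Fin 3) (Fin 3) ℝ)
    (hM : M = D⁻¹ - s⁻¹ • (D⁻¹ * bᵀ * b * D⁻¹))
    (lam₁ : ℝ) (hlam₁ : lam₁ = lam ^ 2 / (1 + H + 3 * H ^ 2 * lam⁻¹)) :
    lam ≤ s ∧ s ≤ 1 + H + 3 * lam⁻¹ * H ^ 2 ∧
    (M - lam₁ • (1 : Matrix (Fin 3) (Fin 3) ℝ)).PosSemidef ∧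
    (lam₁⁻¹ • (1 : Matrix (Fin 3) (Fin 3) ℝ) - M).PosSemidef := by
  have hP : D⁻¹.PosSemidef := hD.inv.posSemidef
  have hPlo : lam • 1 ≤ D⁻¹ := by
    simpa [nonsing_inv_eq_ringInverse] using
      smul_one_le_ringInverse hD.isStrictlyPositive (inv_pos.2 hlam) hDhi
  have hPhi : D⁻¹ ≤ lam⁻¹ • 1 := by
    simpa [nonsing_inv_eq_ringInverse] using ringInverse_le_smul_one hD.isStrictlyPositive hlam hDlo
  set q := (b * D⁻¹ * bᵀ) 0 0
  have hq0 : 0 ≤ q := by simpa using (hP.mul_mul_conjTranspose_same b).diag_nonneg (i := 0)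
  have hq : q ≤ lam⁻¹ * 3 * H ^ 2 := by
    simpa using mul_mul_transpose_apply_le_of_abs_le (inv_pos.2 hlam).le hPhi b 0 hb
  have hs_lo : lam ≤ s := by linarith
  have hs_hi : s ≤ 1 + H + 3 * lam⁻¹ * H ^ 2 := by linarith
  have hs_pos : 0 < s := hlam.trans_le hs_lo
  have hMlo : (a / s) • D⁻¹ ≤ M := by
    rw [hM, hs]
    exact div_add_smul_le_sub_inv_smul (hP.mul_transpose_mul_mul_le b) (hs ▸ hs_pos)
  have hMhi : M ≤ D⁻¹ := by
    rw [hM]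
    exact sub_le_self _ (smul_nonneg (inv_nonneg.2 hs_pos.le) (hP.mul_transpose_mul_mul_nonneg b))
  have hK : 1 + H + 3 * H ^ 2 * lam⁻¹ = 1 + H + 3 * lam⁻¹ * H ^ 2 := by ring
  have hlam₁_le : lam₁ ≤ a / s * lam := hlam₁ ▸ hK ▸ sq_div_le_div_mul hlam ha1 hs_pos hs_hi
  have hlam₁_pos : 0 < lam₁ := hlam₁ ▸ hK ▸ div_pos (by positivity) (hs_pos.trans_le hs_hi)
  have hlam₁_le_lam : lam₁ ≤ lam :=
    hlam₁_le.trans (mul_le_of_le_one_left hlam.le (div_le_one_of_le₀ (by linarith) hs_pos.le))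
  refine ⟨hs_lo, hs_hi, le_iff.mp ?_, le_iff.mp ?_⟩
  · calc lam₁ • 1 ≤ (a / s * lam) • (1 : Matrix (Fin 3) (Fin 3) ℝ) :=
          smul_le_smul_of_nonneg_right hlam₁_le zero_le_one
      _ = (a / s) • (lam • 1) := mul_smul _ _ _
      _ ≤ (a / s) • D⁻¹ :=
          smul_le_smul_of_nonneg_left hPlo (div_nonneg (hlam.le.trans ha1) hs_pos.le)
      _ ≤ M := hMlo
  · calc M ≤ D⁻¹ := hMhi
      _ ≤ lam⁻¹ • 1 := hPhi
      _ ≤ lam₁⁻¹ • 1 := smul_le_smul_of_nonneg_right (inv_anti₀ hlam₁_pos hlam₁_le_lam) zero_le_one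

/-- Bounds on s = a + b D⁻¹ bᵀ and on M = D⁻¹ - D⁻¹bᵀbD⁻¹/s under the uniform
ellipticity assumptions of Proposition 2.2. -/
theorem uniform_ellipticity_inverse_block
    (lam H a : ℝ) (hlam : 0 < lam) (hlam1 : lam ≤ 1) (hH : 0 ≤ H)
    (ha1 : lam ≤ a) (ha2 : a ≤ 1 + H)
    (b : Matrix (Fin 1) (Fin 3) ℝ) (hb : ∀ i, |b 0 i| ≤ H)
    (D : Matrix (Fin 3) (Fin 3) ℝ) (hDsymm : D.IsSymm) (hD : D.PosDef)
    (hDlo : (D - lam • (1 : Matrix (Fin 3) (Fin 3) ℝ)).PosSemidef)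
    (hDhi : (lam⁻¹ • (1 : Matrix (Fin 3) (Fin 3) ℝ) - D).PosSemidef)
    (s : ℝ) (hs : s = a + (b * D⁻¹ * bᵀ) 0 0)
    (M : Matrix (Fin 3) (Fin 3) ℝ)
    (hM : M = D⁻¹ - s⁻¹ • (D⁻¹ * bᵀ * b * D⁻¹))
    (lam₁ : ℝ) (hlam₁ : lam₁ = lam ^ 2 / (1 + H + 3 * H ^ 2 * lam⁻¹)) :
    lam ≤ s ∧ s ≤ 1 + H + 3 * lam⁻¹ * H ^ 2 ∧
    (M - lam₁ • (1 : Matrix (Fin 3) (Fin 3) ℝ)).PosSemidef ∧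
    (lam₁⁻¹ • (1 : Matrix (Fin 3) (Fin 3) ℝ) - M).PosSemidef :=
  uniform_ellipticity_inverse_block_general lam H a hlam ha1 ha2 b hb D hD hDlo hDhi s hs M hM lam₁
    hlam₁
end

section
/- Let φ : [0, ∞) → ℝ be C¹ with ∫₀^∞ (φ'(r))² r² dr < ∞ and r·φ(r)² → 0 as r → ∞. Then ∫₀^∞ (φ(r)/(1+r))² r² dr ≤ 6·(∫₀^∞ (φ'(r))² r² dr + sup_{r≥0} r·φ(r)²). (Hardy-type inequality with weight (1+r)⁻², proven via the auxiliary function η(r) = r - 2ln(1+r) + r/(1+r).) -/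
/-!
Since η' = r²/(1+r)², the left-hand side over [0, R] is ∫ φ² η', and integrating (φ² η)' gives
∫₀ᴿ φ² η' = φ(R)² η(R) - ∫₀ᴿ 2 φ φ' η. The boundary term is at most R φ(R)², as η ≤ r.
Since 0 ≤ η ≤ r²/(1+r), AM-GM bounds the cross term:
|2 φ φ' η| ≤ 2 |φ r/(1+r)| |φ' r| ≤ ½ (φ/(1+r))² r² + 2 φ'² r².
Absorbing half of the left-hand side gives ∫₀ᴿ (φ/(1+r))² r² ≤ 2 sup r φ² + 4 ∫ φ'² r².
The supremum is finite because r φ(r)² is continuous and tends to 0; let R → ∞.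
-/

open MeasureTheory Real Set Filter Topology

noncomputable def hardyEta (r : ℝ) : ℝ := r - 2 * log (1 + r) + r / (1 + r)

@[simp] lemma hardyEta_zero : hardyEta 0 = 0 := by simp [hardyEta]

lemma hasDerivAt_hardyEta {r : ℝ} (hr : 0 ≤ r) :
    HasDerivAt hardyEta (r ^ 2 / (1 + r) ^ 2) r := by
  have h1 : 1 + r ≠ 0 := by positivity
  have hlog : HasDerivAt (fun x => log (1 + x)) (1 / (1 + r)) r := by
    simpa using ((hasDerivAt_id' r).const_add 1).log h1
  have hdiv : HasDerivAt (fun x => x / (1 + x)) ((1 * (1 + r) - r * 1) / (1 + r) ^ 2) r :=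
    (hasDerivAt_id' r).div ((hasDerivAt_id' r).const_add 1) h1
  exact (((hasDerivAt_id' r).sub (hlog.const_mul 2)).add hdiv).congr_deriv
    (by field_simp; ring)

lemma hardyEta_nonneg {r : ℝ} (hr : 0 ≤ r) : 0 ≤ hardyEta r := by
  have hmono : MonotoneOn hardyEta (Ici 0) := by
    refine monotoneOn_of_hasDerivWithinAt_nonneg (f' := fun x => x ^ 2 / (1 + x) ^ 2)
      (convex_Ici 0)
      (fun x hx => (hasDerivAt_hardyEta hx).continuousAt.continuousWithinAt)
      (fun x hx => ?_) (fun x _ => by positivity)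
    rw [interior_Ici] at hx
    exact (hasDerivAt_hardyEta hx.le).hasDerivWithinAt
  simpa using hmono self_mem_Ici hr hr

lemma hardyEta_le {r : ℝ} (hr : 0 ≤ r) : hardyEta r ≤ r ^ 2 / (1 + r) := by
  have h1 : 0 < 1 + r := by positivity
  have hlog : r / (1 + r) ≤ log (1 + r) := by
    convert one_sub_inv_le_log_of_pos h1 using 1
    field_simp
    ring
  have h : r - 2 * (r / (1 + r)) + r / (1 + r) = r ^ 2 / (1 + r) := by field_simp; ring
  unfold hardyEta
  linarith

lemma hardyEta_le_self {r : ℝ} (hr : 0 ≤ r) : hardyEta r ≤ r :=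
  (hardyEta_le hr).trans <| by
    rw [div_le_iff₀ (by positivity)]
    nlinarith

lemma neg_two_mul_mul_le {a b e x : ℝ} (hx : 0 ≤ x) (he : |e| ≤ x ^ 2 / (1 + x)) :
    -(2 * a * b * e) ≤ (a / (1 + x)) ^ 2 * x ^ 2 / 2 + 2 * b ^ 2 * x ^ 2 := by
  set u := a * x / (1 + x)
  set v := b * x
  have h : -(2 * a * b * e) ≤ 2 * |u| * |v| := calc
    -(2 * a * b * e) ≤ 2 * |a| * |b| * |e| := by
      simpa [abs_mul] using neg_le_abs (2 * a * b * e)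
    _ ≤ 2 * |a| * |b| * (x ^ 2 / (1 + x)) := by gcongr
    _ = 2 * |u| * |v| := by
      have h1 : 0 ≤ 1 + x := by positivity
      simp only [u, v, abs_mul, abs_div, abs_of_nonneg hx, abs_of_nonneg h1]
      ring
  have hu : (a / (1 + x)) ^ 2 * x ^ 2 = |u| ^ 2 := by rw [sq_abs]; ring
  rw [hu]
  nlinarith [sq_nonneg (|u| - 2 * |v|), sq_abs v]

lemma bddAbove_image_Ici_of_tendsto {f : ℝ → ℝ} {a l : ℝ} (hf : ContinuousOn f (Ici a))
    (hlim : Tendsto f atTop (𝓝 l)) : BddAbove (f '' Ici a) := by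
  obtain ⟨M, hM⟩ := eventually_atTop.1 (hlim.eventually (gt_mem_nhds (lt_add_one l)))
  refine (((isCompact_Icc (a := a) (b := M)).bddAbove_image (hf.mono Icc_subset_Ici_self)).union
    (bddAbove_Iic (a := l + 1))).mono ?_
  rintro _ ⟨x, hx, rfl⟩
  rcases le_total x M with h | h
  · exact Or.inl ⟨x, ⟨hx, h⟩, rfl⟩
  · exact Or.inr (hM x h).le

lemma setIntegral_Ioi_le_of_intervalIntegral_le {f : ℝ → ℝ} {a C : ℝ} (hf : ∀ x, 0 ≤ f x)
    (hfi : ∀ R, IntegrableOn f (Ioc a R)) (hC : ∀ R ≥ a, ∫ x in a..R, f x ≤ C) :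
    ∫ x in Ioi a, f x ≤ C := by
  have hnorm : ∀ᶠ R in atTop, ∫ x in a..R, ‖f x‖ ≤ C := by
    filter_upwards [eventually_ge_atTop a] with R hR
    simpa only [Real.norm_of_nonneg (hf _)] using hC R hR
  have hint := integrableOn_Ioi_of_intervalIntegral_norm_bounded C a hfi tendsto_id hnorm
  exact le_of_tendsto (intervalIntegral_tendsto_integral_Ioi a hint tendsto_id)
    ((eventually_ge_atTop a).mono hC)

section
variable {φ : ℝ → ℝ} {R : ℝ}

lemma continuousOn_sq_div_one_add_mul_sq (hφ : ContinuousOn φ (Icc 0 R)) :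
    ContinuousOn (fun r => (φ r / (1 + r)) ^ 2 * r ^ 2) (Icc 0 R) := by
  refine ((hφ.div (by fun_prop) fun r hr => ?_).pow 2).mul (by fun_prop)
  have := hr.1
  positivity

lemma intervalIntegral_sq_div_one_add_mul_sq_eq (hR : 0 ≤ R)
    (hdiff : ∀ r ∈ Icc 0 R, DifferentiableAt ℝ φ r) (hcont : ContinuousOn (deriv φ) (Icc 0 R)) :
    ∫ r in 0..R, (φ r / (1 + r)) ^ 2 * r ^ 2
      = φ R ^ 2 * hardyEta R - ∫ r in 0..R, 2 * φ r * deriv φ r * hardyEta r := by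
  have hφ : ContinuousOn φ (Icc 0 R) := fun r hr => (hdiff r hr).continuousAt.continuousWithinAt
  have hη : ContinuousOn hardyEta (Icc 0 R) :=
    fun r hr => (hasDerivAt_hardyEta hr.1).continuousAt.continuousWithinAt
  have hderiv : ∀ r ∈ uIcc 0 R, HasDerivAt (fun r => φ r ^ 2 * hardyEta r)
      (2 * φ r * deriv φ r * hardyEta r + (φ r / (1 + r)) ^ 2 * r ^ 2) r := by
    intro r hr
    rw [uIcc_of_le hR] at hr
    have h1 : 1 + r ≠ 0 := by have := hr.1; positivity
    exact (((hdiff r hr).hasDerivAt.fun_pow 2).mul (hasDerivAt_hardyEta hr.1)).congr_deriv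
      (by field_simp; ring)
  have hcross : IntervalIntegrable (fun r => 2 * φ r * deriv φ r * hardyEta r) volume 0 R :=
    (by fun_prop : ContinuousOn _ (Icc 0 R)).intervalIntegrable_of_Icc (μ := volume) hR
  have hmain := (continuousOn_sq_div_one_add_mul_sq hφ).intervalIntegrable_of_Icc (μ := volume) hR
  rw [eq_sub_iff_add_eq, add_comm, ← intervalIntegral.integral_add hcross hmain,
    intervalIntegral.integral_eq_sub_of_hasDerivAt hderiv (hcross.add hmain)]
  simp

lemma intervalIntegral_sq_div_one_add_mul_sq_le (hR : 0 ≤ R)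
    (hdiff : ∀ r ∈ Icc 0 R, DifferentiableAt ℝ φ r) (hcont : ContinuousOn (deriv φ) (Icc 0 R)) :
    ∫ r in 0..R, (φ r / (1 + r)) ^ 2 * r ^ 2
      ≤ 2 * (R * φ R ^ 2) + 4 * ∫ r in 0..R, deriv φ r ^ 2 * r ^ 2 := by
  have hφ : ContinuousOn φ (Icc 0 R) := fun r hr => (hdiff r hr).continuousAt.continuousWithinAt
  have hmain := (continuousOn_sq_div_one_add_mul_sq hφ).intervalIntegrable_of_Icc (μ := volume) hR
  have henergy : IntervalIntegrable (fun r => deriv φ r ^ 2 * r ^ 2) volume 0 R :=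
    (by fun_prop : ContinuousOn _ (Icc 0 R)).intervalIntegrable_of_Icc (μ := volume) hR
  have hη : ContinuousOn hardyEta (Icc 0 R) :=
    fun r hr => (hasDerivAt_hardyEta hr.1).continuousAt.continuousWithinAt
  have hcross : IntervalIntegrable (fun r => -(2 * φ r * deriv φ r * hardyEta r)) volume 0 R :=
    (by fun_prop : ContinuousOn _ (Icc 0 R)).intervalIntegrable_of_Icc (μ := volume) hR
  have hboundary : φ R ^ 2 * hardyEta R ≤ R * φ R ^ 2 := by
    rw [mul_comm R]
    exact mul_le_mul_of_nonneg_left (hardyEta_le_self hR) (sq_nonneg _)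
  have hcross_le : -∫ r in 0..R, 2 * φ r * deriv φ r * hardyEta r
      ≤ (∫ r in 0..R, (φ r / (1 + r)) ^ 2 * r ^ 2) / 2
        + 2 * ∫ r in 0..R, deriv φ r ^ 2 * r ^ 2 := calc
    _ = ∫ r in 0..R, -(2 * φ r * deriv φ r * hardyEta r) := intervalIntegral.integral_neg.symm
    _ ≤ ∫ r in 0..R, ((φ r / (1 + r)) ^ 2 * r ^ 2 / 2 + 2 * (deriv φ r ^ 2 * r ^ 2)) := by
      refine intervalIntegral.integral_mono_on hR hcross
        ((hmain.div_const 2).add (henergy.const_mul 2)) fun r hr => ?_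
      rw [← mul_assoc]
      exact neg_two_mul_mul_le hr.1
        ((abs_of_nonneg (hardyEta_nonneg hr.1)).trans_le (hardyEta_le hr.1))
    _ = _ := by
      rw [intervalIntegral.integral_add (hmain.div_const 2) (henergy.const_mul 2),
        intervalIntegral.integral_div, intervalIntegral.integral_const_mul]
  rw [intervalIntegral_sq_div_one_add_mul_sq_eq hR hdiff hcont] at hcross_le ⊢
  linarith

end

/-- Hardy-type inequality: for φ ∈ C¹([0,∞)) with finite weighted energy and
r·φ(r)² → 0 at infinity,
∫₀^∞ (φ/(1+r))² r² dr ≤ 6·(∫₀^∞ (φ')² r² dr + sup_{r≥0} r·φ(r)²). -/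
theorem hardy_type_inequality
    (φ : ℝ → ℝ)
    (hdiff : ∀ r ∈ Set.Ici (0 : ℝ), DifferentiableAt ℝ φ r)
    (hcont : ContinuousOn (deriv φ) (Set.Ici (0 : ℝ)))
    (hint : IntegrableOn (fun r => (deriv φ r) ^ 2 * r ^ 2) (Set.Ici (0 : ℝ)))
    (hlim : Filter.Tendsto (fun r => r * (φ r) ^ 2) Filter.atTop (nhds 0)) :
    ∫ r in Set.Ici (0 : ℝ), (φ r / (1 + r)) ^ 2 * r ^ 2
      ≤ 6 * ((∫ r in Set.Ici (0 : ℝ), (deriv φ r) ^ 2 * r ^ 2)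
          + ⨆ r : Set.Ici (0 : ℝ), (r : ℝ) * (φ r) ^ 2) := by
  set E := ∫ r in Ici (0 : ℝ), deriv φ r ^ 2 * r ^ 2
  set S := ⨆ r : Ici (0 : ℝ), (r : ℝ) * φ r ^ 2
  have hφ : ContinuousOn φ (Ici 0) := fun r hr => (hdiff r hr).continuousAt.continuousWithinAt
  have hbdd : BddAbove (range fun r : Ici (0 : ℝ) => (r : ℝ) * φ r ^ 2) := by
    simpa only [image_eq_range] using
      bddAbove_image_Ici_of_tendsto (f := fun r => r * φ r ^ 2) (by fun_prop) hlim
  have hS : ∀ r ≥ 0, r * φ r ^ 2 ≤ S := fun r hr => le_ciSup hbdd ⟨r, hr⟩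
  have hS0 : 0 ≤ S := by simpa using hS 0 le_rfl
  have hE0 : 0 ≤ E := setIntegral_nonneg measurableSet_Ici fun r _ => by positivity
  have hbound : ∀ R ≥ 0, ∫ r in 0..R, (φ r / (1 + r)) ^ 2 * r ^ 2 ≤ 2 * S + 4 * E := by
    intro R hR
    have hER : ∫ r in 0..R, deriv φ r ^ 2 * r ^ 2 ≤ E := by
      rw [intervalIntegral.integral_of_le hR]
      exact setIntegral_mono_set hint (ae_of_all _ fun r => by positivity)
        (Ioc_subset_Icc_self.trans Icc_subset_Ici_self).eventuallyLE
    have := intervalIntegral_sq_div_one_add_mul_sq_le hR (fun r hr => hdiff r hr.1)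
      (hcont.mono Icc_subset_Ici_self)
    linarith [hS R hR]
  have hfi : ∀ R, IntegrableOn (fun r => (φ r / (1 + r)) ^ 2 * r ^ 2) (Ioc 0 R) := fun R =>
    (continuousOn_sq_div_one_add_mul_sq (hφ.mono Icc_subset_Ici_self)).integrableOn_Icc.mono_set
      Ioc_subset_Icc_self
  calc ∫ r in Ici (0 : ℝ), (φ r / (1 + r)) ^ 2 * r ^ 2
      = ∫ r in Ioi (0 : ℝ), (φ r / (1 + r)) ^ 2 * r ^ 2 := integral_Ici_eq_integral_Ioi
    _ ≤ 2 * S + 4 * E :=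
      setIntegral_Ioi_le_of_intervalIntegral_le (fun r => by positivity) hfi hbound
    _ ≤ 6 * (E + S) := by linarith
end

section
/- Let H ∈ [0, 1/700] and suppose a 4×4 symmetric real matrix g satisfies |g_{αβ} - m_{αβ}| ≤ H entrywise with m = diag(-1,1,1,1). Then -det(g) ≥ (1 - H - 2H²)⁴ > 0; in particular g is invertible with Lorentzian signature determinant sign. -/
open Matrix

private lemma abs_prod4 {a b c d A B C D : ℝ} (ha : |a| ≤ A) (hb : |b| ≤ B)
    (hc : |c| ≤ C) (hd : |d| ≤ D) : |a * b * c * d| ≤ A * B * C * D := by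
  have h1 : |a * b| ≤ A * B := by
    rw [abs_mul]; exact mul_le_mul ha hb (abs_nonneg _) ((abs_nonneg _).trans ha)
  have h2 : |a * b * c| ≤ A * B * C := by
    rw [abs_mul]; exact mul_le_mul h1 hc (abs_nonneg _) ((abs_nonneg _).trans h1)
  rw [abs_mul]; exact mul_le_mul h2 hd (abs_nonneg _) ((abs_nonneg _).trans h2)

private lemma prod4_lower {a b c d l : ℝ} (hl : 0 ≤ l) (ha : l ≤ a) (hb : l ≤ b)
    (hc : l ≤ c) (hd : l ≤ d) : l * l * l * l ≤ a * b * c * d := by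
  have hab : l * l ≤ a * b := mul_le_mul ha hb hl (hl.trans ha)
  have habc : l * l * l ≤ a * b * c :=
    mul_le_mul hab hc hl (mul_nonneg (hl.trans ha) (hl.trans hb))
  exact mul_le_mul habc hd hl
    (mul_nonneg (mul_nonneg (hl.trans ha) (hl.trans hb)) (hl.trans hc))

private lemma key_ineq {H : ℝ} (hH0 : 0 ≤ H) (hH : H ≤ 1 / 700) :
    (1 - H - 2 * H ^ 2) ^ 4 ≤
      (1-H)*(1-H)*(1-H)*(1-H) - 6*((1+H)*(1+H)*H*H) - 8*((1+H)*H*H*H) - 9*(H*H*H*H) := by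
  nlinarith [sq_nonneg H, sq_nonneg (H*H), sq_nonneg (H*H*H), sq_nonneg (H*(1-700*H)),
    mul_nonneg hH0 hH0, mul_nonneg (mul_nonneg hH0 hH0) hH0]

private lemma my_det_fin_four (A : Matrix (Fin 4) (Fin 4) ℝ) : A.det =
    A 0 0 * A 1 1 * A 2 2 * A 3 3 - A 0 0 * A 1 1 * A 2 3 * A 3 2
  - A 0 0 * A 1 2 * A 2 1 * A 3 3 + A 0 0 * A 1 2 * A 2 3 * A 3 1
  + A 0 0 * A 1 3 * A 2 1 * A 3 2 - A 0 0 * A 1 3 * A 2 2 * A 3 1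
  - A 0 1 * A 1 0 * A 2 2 * A 3 3 + A 0 1 * A 1 0 * A 2 3 * A 3 2
  + A 0 1 * A 1 2 * A 2 0 * A 3 3 - A 0 1 * A 1 2 * A 2 3 * A 3 0
  - A 0 1 * A 1 3 * A 2 0 * A 3 2 + A 0 1 * A 1 3 * A 2 2 * A 3 0
  + A 0 2 * A 1 0 * A 2 1 * A 3 3 - A 0 2 * A 1 0 * A 2 3 * A 3 1
  - A 0 2 * A 1 1 * A 2 0 * A 3 3 + A 0 2 * A 1 1 * A 2 3 * A 3 0
  + A 0 2 * A 1 3 * A 2 0 * A 3 1 - A 0 2 * A 1 3 * A 2 1 * A 3 0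
  - A 0 3 * A 1 0 * A 2 1 * A 3 2 + A 0 3 * A 1 0 * A 2 2 * A 3 1
  + A 0 3 * A 1 1 * A 2 0 * A 3 2 - A 0 3 * A 1 1 * A 2 2 * A 3 0
  - A 0 3 * A 1 2 * A 2 0 * A 3 1 + A 0 3 * A 1 2 * A 2 1 * A 3 0 := by
  rw [Matrix.det_succ_row_zero]
  simp [Fin.sum_univ_succ, Matrix.det_fin_three, Matrix.submatrix, Fin.succAbove,
    show (Fin.succ 2 : Fin 4) = 3 from rfl, show ((2 : Fin 3).castSucc : Fin 4) = 2 from rfl,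
    show ((1:Fin 4) < Fin.succ 2) from by decide]
  ring

/-- If H ∈ [0, 1/700] and g is symmetric with |g_{αβ} - m_{αβ}| ≤ H entrywise,
m = diag(-1,1,1,1), then -det g ≥ (1 - H - 2H²)⁴ > 0. -/
theorem det_lower_bound_perturbed_minkowski
    (H : ℝ) (hH0 : 0 ≤ H) (hH : H ≤ 1 / 700)
    (g : Matrix (Fin 4) (Fin 4) ℝ) (hsymm : g.IsSymm)
    (m : Matrix (Fin 4) (Fin 4) ℝ)
    (hm : m = Matrix.diagonal ![-1, 1, 1, 1])
    (hpert : ∀ α β : Fin 4, |g α β - m α β| ≤ H) :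
    (1 - H - 2 * H ^ 2) ^ 4 ≤ -g.det ∧ 0 < (1 - H - 2 * H ^ 2) ^ 4 := by
  subst hm
  have hpos : 0 < 1 - H - 2 * H ^ 2 := by nlinarith
  refine ⟨?_, pow_pos hpos 4⟩
  have h00 : |g 0 0 + 1| ≤ H := by simpa [Matrix.diagonal] using hpert 0 0
  have h11 : |g 1 1 - 1| ≤ H := by simpa [Matrix.diagonal] using hpert 1 1
  have h22 : |g 2 2 - 1| ≤ H := by simpa [Matrix.diagonal] using hpert 2 2
  have h33 : |g 3 3 - 1| ≤ H := by simpa [Matrix.diagonal] using hpert 3 3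
  have e00 := abs_le.mp h00
  have e11 := abs_le.mp h11
  have e22 := abs_le.mp h22
  have e33 := abs_le.mp h33
  have hB00 : |g 0 0| ≤ 1 + H := abs_le.mpr ⟨by linarith [e00.1], by linarith [e00.2]⟩
  have hB11 : |g 1 1| ≤ 1 + H := abs_le.mpr ⟨by linarith [e11.1], by linarith [e11.2]⟩
  have hB22 : |g 2 2| ≤ 1 + H := abs_le.mpr ⟨by linarith [e22.1], by linarith [e22.2]⟩
  have hB33 : |g 3 3| ≤ 1 + H := abs_le.mpr ⟨by linarith [e33.1], by linarith [e33.2]⟩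
  have hL0 : 1 - H ≤ -g 0 0 := by linarith [e00.2]
  have hL1 : 1 - H ≤ g 1 1 := by linarith [e11.1]
  have hL2 : 1 - H ≤ g 2 2 := by linarith [e22.1]
  have hL3 : 1 - H ≤ g 3 3 := by linarith [e33.1]
  have hlnn : (0:ℝ) ≤ 1 - H := by linarith
  have hB01 : |g 0 1| ≤ H := by simpa [Matrix.diagonal] using hpert 0 1
  have hB02 : |g 0 2| ≤ H := by simpa [Matrix.diagonal] using hpert 0 2
  have hB03 : |g 0 3| ≤ H := by simpa [Matrix.diagonal] using hpert 0 3
  have hB10 : |g 1 0| ≤ H := by simpa [Matrix.diagonal] using hpert 1 0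
  have hB12 : |g 1 2| ≤ H := by simpa [Matrix.diagonal] using hpert 1 2
  have hB13 : |g 1 3| ≤ H := by simpa [Matrix.diagonal] using hpert 1 3
  have hB20 : |g 2 0| ≤ H := by simpa [Matrix.diagonal] using hpert 2 0
  have hB21 : |g 2 1| ≤ H := by simpa [Matrix.diagonal] using hpert 2 1
  have hB23 : |g 2 3| ≤ H := by simpa [Matrix.diagonal] using hpert 2 3
  have hB30 : |g 3 0| ≤ H := by simpa [Matrix.diagonal] using hpert 3 0
  have hB31 : |g 3 1| ≤ H := by simpa [Matrix.diagonal] using hpert 3 1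
  have hB32 : |g 3 2| ≤ H := by simpa [Matrix.diagonal] using hpert 3 2
  have tid : (1-H)*(1-H)*(1-H)*(1-H) ≤ (-g 0 0) * g 1 1 * g 2 2 * g 3 3 :=
    prod4_lower hlnn hL0 hL1 hL2 hL3
  have t0132 := abs_le.mp (abs_prod4 (a := g 0 0) hB00 hB11 hB23 hB32)
  have t0213 := abs_le.mp (abs_prod4 (a := g 0 0) hB00 hB12 hB21 hB33)
  have t0231 := abs_le.mp (abs_prod4 (a := g 0 0) hB00 hB12 hB23 hB31)
  have t0312 := abs_le.mp (abs_prod4 (a := g 0 0) hB00 hB13 hB21 hB32)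
  have t0321 := abs_le.mp (abs_prod4 (a := g 0 0) hB00 hB13 hB22 hB31)
  have t1023 := abs_le.mp (abs_prod4 (a := g 0 1) hB01 hB10 hB22 hB33)
  have t1032 := abs_le.mp (abs_prod4 (a := g 0 1) hB01 hB10 hB23 hB32)
  have t1203 := abs_le.mp (abs_prod4 (a := g 0 1) hB01 hB12 hB20 hB33)
  have t1230 := abs_le.mp (abs_prod4 (a := g 0 1) hB01 hB12 hB23 hB30)
  have t1302 := abs_le.mp (abs_prod4 (a := g 0 1) hB01 hB13 hB20 hB32)
  have t1320 := abs_le.mp (abs_prod4 (a := g 0 1) hB01 hB13 hB22 hB30)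
  have t2013 := abs_le.mp (abs_prod4 (a := g 0 2) hB02 hB10 hB21 hB33)
  have t2031 := abs_le.mp (abs_prod4 (a := g 0 2) hB02 hB10 hB23 hB31)
  have t2103 := abs_le.mp (abs_prod4 (a := g 0 2) hB02 hB11 hB20 hB33)
  have t2130 := abs_le.mp (abs_prod4 (a := g 0 2) hB02 hB11 hB23 hB30)
  have t2301 := abs_le.mp (abs_prod4 (a := g 0 2) hB02 hB13 hB20 hB31)
  have t2310 := abs_le.mp (abs_prod4 (a := g 0 2) hB02 hB13 hB21 hB30)
  have t3012 := abs_le.mp (abs_prod4 (a := g 0 3) hB03 hB10 hB21 hB32)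
  have t3021 := abs_le.mp (abs_prod4 (a := g 0 3) hB03 hB10 hB22 hB31)
  have t3102 := abs_le.mp (abs_prod4 (a := g 0 3) hB03 hB11 hB20 hB32)
  have t3120 := abs_le.mp (abs_prod4 (a := g 0 3) hB03 hB11 hB22 hB30)
  have t3201 := abs_le.mp (abs_prod4 (a := g 0 3) hB03 hB12 hB20 hB31)
  have t3210 := abs_le.mp (abs_prod4 (a := g 0 3) hB03 hB12 hB21 hB30)
  have key := key_ineq hH0 hH
  rw [my_det_fin_four]
  linarith [tid, key, t0132.1, t0213.1, t0231.1, t0312.1, t0321.1, t1023.1, t1032.1, t1203.1, t1230.1, t1302.1, t1320.1, t2013.1, t2031.1, t2103.1, t2130.1, t2301.1, t2310.1, t3012.1, t3021.1, t3102.1, t3120.1, t3201.1, t3210.1, t0132.2, t0213.2, t0231.2, t0312.2, t0321.2, t1023.2, t1032.2, t1203.2, t1230.2, t1302.2, t1320.2, t2013.2, t2031.2, t2103.2, t2130.2, t2301.2, t2310.2, t3012.2, t3021.2, t3102.2, t3120.2, t3201.2, t3210.2]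
end

section
/- Suppose a nonincreasing sequence of nonnegative reals is replaced by the following recursion: let E : ℕ → ℝ≥0, τₙ a dyadic sequence (γⁿ ≤ τₙ ≤ γⁿ⁺¹ for some γ > 1), C ≥ 0, 0 < α < 1, and suppose E(n) ≤ C·τₙ⁻¹·E(n-1) + C·(1+τₙ)^(α-2) for all n ≥ 1, and E(n) ≤ C for all n. Then there is a constant C' (depending on C, γ, α) with E(n) ≤ C'·(1+τₙ)^(α-2) for all n. -/
/-- Iteration lemma underlying the energy decay: from
E(n) ≤ C τₙ⁻¹ E(n-1) + C(1+τₙ)^(α-2) along a dyadic sequence τₙ ∈ [γⁿ, γⁿ⁺¹]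
and a uniform bound E(n) ≤ C, deduce E(n) ≤ C'(1+τₙ)^(α-2). -/
theorem dyadic_iteration_decay
    (E : ℕ → ℝ) (hE : ∀ n, 0 ≤ E n)
    (γ : ℝ) (hγ : 1 < γ)
    (τ : ℕ → ℝ) (hτ : ∀ n, γ ^ n ≤ τ n ∧ τ n ≤ γ ^ (n + 1))
    (C : ℝ) (hC : 0 ≤ C)
    (α : ℝ) (hα : 0 < α) (hα1 : α < 1)
    (hrec : ∀ n : ℕ, 1 ≤ n → E n ≤ C * (τ n)⁻¹ * E (n - 1) + C * (1 + τ n) ^ (α - 2))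
    (hbd : ∀ n, E n ≤ C) :
    ∃ C' : ℝ, 0 ≤ C' ∧ ∀ n, E n ≤ C' * (1 + τ n) ^ (α - 2) := by
  have hγ0 : (0:ℝ) < γ := lt_trans one_pos hγ
  have hτpos : ∀ n, 0 < τ n := fun n => lt_of_lt_of_le (pow_pos hγ0 n) (hτ n).1
  have h1τ : ∀ n, (0:ℝ) < 1 + τ n := fun n => by linarith [hτpos n]
  have hae : α - 2 ≤ 0 := by linarith
  -- choose N with 2*C*(2*γ^2)^(2-α) < γ^N
  obtain ⟨N, hN⟩ := pow_unbounded_of_one_lt (2 * C * (2*γ^2)^(2-α) : ℝ) hγ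
  set C' := max (C * (1 + γ^(N+1))^(2-α)) (2*C) with hC'def
  have hC'0 : 0 ≤ C' := le_max_of_le_right (by linarith)
  refine ⟨C', hC'0, ?_⟩
  intro n
  induction n using Nat.strong_induction_on with
  | _ n ih =>
    rcases le_or_gt n N with hn | hn
    · -- base case : n ≤ N, use the uniform bound
      have hpow : γ^(n+1) ≤ γ^(N+1) := pow_le_pow_right₀ (le_of_lt hγ) (by omega)
      have h1 : 1 + τ n ≤ 1 + γ^(N+1) := by linarith [(hτ n).2]
      have h2 : (1 + γ^(N+1):ℝ)^(α-2) ≤ (1+τ n)^(α-2) :=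
        Real.rpow_le_rpow_of_nonpos (h1τ n) h1 hae
      have hbase : (0:ℝ) < 1 + γ^(N+1) := by positivity
      have hid : C * (1 + γ^(N+1))^(2-α) * (1 + γ^(N+1))^(α-2) = C := by
        rw [mul_assoc, ← Real.rpow_add hbase]
        norm_num
      calc E n ≤ C := hbd n
        _ = C * (1 + γ^(N+1))^(2-α) * (1 + γ^(N+1))^(α-2) := hid.symm
        _ ≤ C' * (1+τ n)^(α-2) := by
            apply mul_le_mul (le_max_left _ _) h2
              (le_of_lt (Real.rpow_pos_of_pos hbase _)) hC'0
    · -- inductive step : n ≥ N+1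
      have hn1 : 1 ≤ n := by omega
      have hkey : C * (τ n)⁻¹ * (1 + τ (n-1))^(α-2) ≤ (1/2) * (1 + τ n)^(α-2) := by
        set q : ℝ := (2*γ^2)^(α-2) with hq
        have hqpos : 0 < q := Real.rpow_pos_of_pos (by positivity) _
        have hqinv : (2*γ^2:ℝ)^(2-α) = q⁻¹ := by
          rw [hq, ← Real.rpow_neg (by positivity)]
          norm_num
        -- from the choice of N : C ≤ (1/2) * q * γ^n
        have hγn : (γ:ℝ)^N ≤ γ^n := pow_le_pow_right₀ (le_of_lt hγ) (by omega)
        have hCq : C ≤ (1/2) * q * γ^n := by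
          have h1 : 2 * C * q⁻¹ ≤ γ^n := by
            rw [← hqinv]; exact le_trans (le_of_lt hN) hγn
          have : 2 * C * q⁻¹ * q ≤ γ^n * q :=
            mul_le_mul_of_nonneg_right h1 (le_of_lt hqpos)
          rw [mul_assoc, inv_mul_cancel₀ (ne_of_gt hqpos), mul_one] at this
          nlinarith
        -- estimates on the three factors
        have hinv : (τ n)⁻¹ ≤ (γ^n)⁻¹ :=
          inv_anti₀ (pow_pos hγ0 n) (hτ n).1
        have hA2 : (1 + τ (n-1))^(α-2) ≤ ((γ:ℝ)^(n-1))^(α-2) := by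
          apply Real.rpow_le_rpow_of_nonpos (pow_pos hγ0 _) _ hae
          linarith [(hτ (n-1)).1]
        have hA3 : ((2:ℝ)*γ^(n+1))^(α-2) ≤ (1 + τ n)^(α-2) := by
          apply Real.rpow_le_rpow_of_nonpos (h1τ n) _ hae
          have h1 : (1:ℝ) ≤ γ^(n+1) := one_le_pow₀ (le_of_lt hγ)
          linarith [(hτ n).2]
        -- the middle inequality after replacing the factors
        have hmid : C * ((γ:ℝ)^n)⁻¹ * ((γ:ℝ)^(n-1))^(α-2)
            ≤ (1/2) * ((2:ℝ)*γ^(n+1))^(α-2) := by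
          have hsplit : ((2:ℝ)*γ^(n+1))^(α-2)
              = q * ((γ:ℝ)^(n-1))^(α-2) := by
            have hexp : (γ:ℝ)^(n+1) = γ^2 * γ^(n-1) := by
              rw [← pow_add]; congr 1; omega
            rw [hexp, hq, ← mul_assoc, Real.mul_rpow (by positivity) (by positivity),
              ← Real.mul_rpow (by positivity) (by positivity)]
          rw [hsplit]
          have hPpos : (0:ℝ) < ((γ:ℝ)^(n-1))^(α-2) :=
            Real.rpow_pos_of_pos (pow_pos hγ0 _) _
          have hγnpos : (0:ℝ) < γ^n := pow_pos hγ0 n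
          -- reduce to C ≤ (1/2) q γ^n
          have : C * ((γ:ℝ)^n)⁻¹ ≤ (1/2) * q := by
            have := mul_le_mul_of_nonneg_right hCq (le_of_lt (inv_pos.mpr hγnpos))
            calc C * ((γ:ℝ)^n)⁻¹ ≤ (1/2) * q * γ^n * (γ^n)⁻¹ := this
              _ = (1/2) * q := by
                  rw [mul_assoc, mul_inv_cancel₀ (ne_of_gt hγnpos), mul_one]
          nlinarith
        calc C * (τ n)⁻¹ * (1 + τ (n-1))^(α-2)
            ≤ C * ((γ:ℝ)^n)⁻¹ * ((γ:ℝ)^(n-1))^(α-2) := by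
              apply mul_le_mul
              · exact mul_le_mul_of_nonneg_left hinv hC
              · exact hA2
              · exact le_of_lt (Real.rpow_pos_of_pos (h1τ _) _)
              · exact mul_nonneg hC (by positivity)
          _ ≤ (1/2) * ((2:ℝ)*γ^(n+1))^(α-2) := hmid
          _ ≤ (1/2) * (1 + τ n)^(α-2) := by linarith
      -- put everything together
      have hIH : E (n-1) ≤ C' * (1 + τ (n-1))^(α-2) := ih (n-1) (by omega)
      have hstep := hrec n hn1
      have hfac : 0 ≤ C * (τ n)⁻¹ := mul_nonneg hC (le_of_lt (inv_pos.mpr (hτpos n)))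
      have h1 : C * (τ n)⁻¹ * E (n-1) ≤ C * (τ n)⁻¹ * (C' * (1 + τ (n-1))^(α-2)) :=
        mul_le_mul_of_nonneg_left hIH hfac
      have h2 : C * (τ n)⁻¹ * (C' * (1 + τ (n-1))^(α-2))
          = C' * (C * (τ n)⁻¹ * (1 + τ (n-1))^(α-2)) := by ring
      have h3 : C' * (C * (τ n)⁻¹ * (1 + τ (n-1))^(α-2))
          ≤ C' * ((1/2) * (1 + τ n)^(α-2)) :=
        mul_le_mul_of_nonneg_left hkey hC'0
      have hC2 : 2 * C ≤ C' := le_max_right _ _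
      have hpos : (0:ℝ) < (1 + τ n)^(α-2) := Real.rpow_pos_of_pos (h1τ n) _
      nlinarith [hpos]
end
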